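/- arXiv:2205.01651 — 2 statements merged into one kernel-verified Lean document; each statement's English description precedes it below -/
import Mathlib

section
/- Let q₁ = ◇ᵣ(A ∧ ◇ᵣB) and qᵢ₊₁ = ◇ᵣ(A ∧ ◇ᵣ(B ∧ ◇ᵣ qᵢ)). Then for all i ≥ 1: ◇ᵣ(A ∧ B) entails qᵢ, and qᵢ does not entail ◇ᵣ(A ∧ B). Moreover, if a data instance D of length at most n satisfies qₙ₊₁ at position 0, then D satisfies ◇ᵣ(A ∧ B) at position 0. -/
inductive LTL (σ : Type) : Type where
  | atom : σ → LTL σ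
  | top : LTL σ
  | bot : LTL σ
  | and : LTL σ → LTL σ → LTL σ
  | next : LTL σ → LTL σ
  | ev : LTL σ → LTL σ
  | evr : LTL σ → LTL σ
  | untl : LTL σ → LTL σ → LTL σ

/-- Satisfaction of an LTL query at position `ℓ` in a data instance `D`
(a finite word over `2^σ`, implicitly extended by `∅`). -/
def sat {σ : Type} (D : List (Finset σ)) : LTL σ → ℕ → Prop
  | .atom a, ℓ => a ∈ D.getD ℓ ∅
  | .top, _ => True
  | .bot, _ => False
  | .and p q, ℓ => sat D p ℓ ∧ sat D q ℓ
  | .next p, ℓ => sat D p (ℓ + 1)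
  | .ev p, ℓ => ∃ m, ℓ < m ∧ sat D p m
  | .evr p, ℓ => ∃ m, ℓ ≤ m ∧ sat D p m
  | .untl p q, ℓ => ∃ m, ℓ < m ∧ sat D q m ∧ ∀ k, ℓ < k → k < m → sat D p k

def equivQ {σ : Type} (p q : LTL σ) : Prop :=
  ∀ (D : List (Finset σ)) (ℓ : ℕ), sat D p ℓ ↔ sat D q ℓ

def entailsQ {σ : Type} (p q : LTL σ) : Prop :=
  ∀ (D : List (Finset σ)) (ℓ : ℕ), sat D p ℓ → sat D q ℓ

/-- The conjunction of the atoms in `ρ`. -/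
noncomputable def conjF {σ : Type} (ρ : Finset σ) : LTL σ :=
  ρ.toList.foldr (fun a r => (LTL.atom a).and r) LTL.top

/-- The query `◇ᵣ(A ∧ B)` over `σ = {A, B}` encoded as `Fin 2` (`A = 0`, `B = 1`). -/
def qAB : LTL (Fin 2) := .evr ((LTL.atom 0).and (.atom 1))

/-- `qIter 0 = q₁ = ◇ᵣ(A ∧ ◇ᵣB)`, `qIter i = q_{i+1} = ◇ᵣ(A ∧ ◇ᵣ(B ∧ ◇ᵣ q_i))`. -/
def qIter : ℕ → LTL (Fin 2)
  | 0 => .evr ((LTL.atom 0).and (.evr (.atom 1)))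
  | n + 1 => .evr ((LTL.atom 0).and (.evr ((LTL.atom 1).and (.evr (qIter n)))))

section Aux

lemma sat_cons {σ : Type} (δ : Finset σ) (D : List (Finset σ)) (p : LTL σ) :
    ∀ ℓ, sat (δ :: D) p (ℓ + 1) ↔ sat D p ℓ := by
  induction p with
  | atom a => intro ℓ; simp [sat]
  | top => intro ℓ; simp [sat]
  | bot => intro ℓ; simp [sat]
  | and p q ihp ihq => intro ℓ; simp only [sat]; rw [ihp, ihq]
  | next p ih => intro ℓ; exact ih (ℓ + 1)
  | ev p ih =>
    intro ℓ
    constructor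
    · rintro ⟨m, hm, hs⟩
      obtain ⟨k, rfl⟩ := Nat.exists_eq_succ_of_ne_zero (by omega : m ≠ 0)
      exact ⟨k, by omega, (ih k).1 hs⟩
    · rintro ⟨m, hm, hs⟩
      exact ⟨m + 1, by omega, (ih m).2 hs⟩
  | evr p ih =>
    intro ℓ
    constructor
    · rintro ⟨m, hm, hs⟩
      obtain ⟨k, rfl⟩ := Nat.exists_eq_succ_of_ne_zero (by omega : m ≠ 0)
      exact ⟨k, by omega, (ih k).1 hs⟩
    · rintro ⟨m, hm, hs⟩
      exact ⟨m + 1, by omega, (ih m).2 hs⟩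
  | untl p q ihp ihq =>
    intro ℓ
    constructor
    · rintro ⟨m, hm, hq, hk⟩
      obtain ⟨k, rfl⟩ := Nat.exists_eq_succ_of_ne_zero (by omega : m ≠ 0)
      exact ⟨k, by omega, (ihq k).1 hq,
        fun j hj1 hj2 => (ihp j).1 (hk (j + 1) (by omega) (by omega))⟩
    · rintro ⟨m, hm, hq, hk⟩
      refine ⟨m + 1, by omega, (ihq m).2 hq, fun j hj1 hj2 => ?_⟩
      obtain ⟨j', rfl⟩ := Nat.exists_eq_succ_of_ne_zero (by omega : j ≠ 0)
      exact (ihp j').2 (hk j' (by omega) (by omega))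

lemma qAB_sat_qIter : ∀ (i : ℕ) (D : List (Finset (Fin 2))) (ℓ : ℕ),
    sat D qAB ℓ → sat D (qIter i) ℓ := by
  intro i
  induction i with
  | zero =>
    rintro D ℓ ⟨m, hm, hA, hB⟩
    exact ⟨m, hm, hA, ⟨m, le_refl m, hB⟩⟩
  | succ n ih =>
    rintro D ℓ ⟨m, hm, hA, hB⟩
    exact ⟨m, hm, hA, ⟨m, le_refl m, hB,
      ⟨m, le_refl m, ih D m ⟨m, le_refl m, hA, hB⟩⟩⟩⟩

/-- The alternating counterexample word `{A}{B}{A}{B}…` with `n+1` blocks. -/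
def altD : ℕ → List (Finset (Fin 2))
  | 0 => [{0}, {1}]
  | n + 1 => {0} :: {1} :: altD n

lemma altD_sat : ∀ n, sat (altD n) (qIter n) 0 := by
  intro n
  induction n with
  | zero =>
    refine ⟨0, le_refl 0, ?_, ⟨1, by omega, ?_⟩⟩ <;> simp [sat, altD]
  | succ n ih =>
    refine ⟨0, le_refl 0, ?_, ⟨1, by omega, ?_, ⟨2, by omega, ?_⟩⟩⟩
    · simp [sat, altD]
    · simp [sat, altD]
    · show sat ({0} :: {1} :: altD n) (qIter n) (1 + 1)
      rw [sat_cons, sat_cons]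
      exact ih

lemma altD_getD (n m : ℕ) :
    (altD n).getD m ∅ = {0} ∨ (altD n).getD m ∅ = {1} ∨ (altD n).getD m ∅ = ∅ := by
  induction n generalizing m with
  | zero =>
    match m with
    | 0 => left; rfl
    | 1 => right; left; rfl
    | m + 2 => right; right; simp [altD]
  | succ n ih =>
    match m with
    | 0 => left; rfl
    | 1 => right; left; rfl
    | m + 2 => exact ih m

lemma altD_not_qAB (n : ℕ) : ¬ sat (altD n) qAB 0 := by
  rintro ⟨m, _, hA, hB⟩
  simp only [sat] at hA hB
  rcases altD_getD n m with h | h | h <;> rw [h] at hA hB <;> revert hA hB <;> decide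

lemma bounded_converse : ∀ (n ℓ : ℕ) (D : List (Finset (Fin 2))),
    D.length ≤ ℓ + n + 1 → sat D (qIter n) ℓ → sat D qAB ℓ := by
  intro n
  induction n with
  | zero =>
    rintro ℓ D hlen ⟨a, ha, hA, ⟨b, hab, hB⟩⟩
    rcases eq_or_lt_of_le hab with rfl | hlt
    · exact ⟨a, ha, hA, hB⟩
    · exfalso
      simp only [sat] at hB
      rw [List.getD_eq_default _ _ (by omega)] at hB
      exact absurd hB (by decide)
  | succ n ih =>
    rintro ℓ D hlen ⟨a, ha, hA, ⟨b, hab, hB, ⟨c, hbc, hc⟩⟩⟩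
    rcases eq_or_lt_of_le hab with rfl | hlt
    · exact ⟨a, ha, hA, hB⟩
    · obtain ⟨m, hm, hs⟩ := ih c D (by omega) hc
      exact ⟨m, by omega, hs⟩

end Aux

/-- For every `i ≥ 1`: `◇ᵣ(A∧B) ⊨ qᵢ` and `qᵢ ⊭ ◇ᵣ(A∧B)`; and every data
instance `D` of length at most `n` (i.e. with at most `n + 1` entries
`δ₀, …, δₙ`) satisfying `q_{n+1}` at `0` also satisfies `◇ᵣ(A∧B)` at `0`. -/
theorem qAB_entails_qIter_and_bounded_converse :
    (∀ i : ℕ, entailsQ qAB (qIter i) ∧ ¬ entailsQ (qIter i) qAB) ∧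
    (∀ (n : ℕ) (D : List (Finset (Fin 2))), D.length ≤ n + 1 →
      sat D (qIter n) 0 → sat D qAB 0) := by
  refine ⟨fun i => ⟨fun D ℓ => qAB_sat_qIter i D ℓ, fun h => altD_not_qAB i (h (altD i) 0 (altD_sat i))⟩, fun n D hlen => bounded_converse n 0 D (by omega)⟩
end

section
/- For every query q in Q[◇] (built from atoms, ⊤, ∧, and strict ◇ only), there is an equivalent query of the form q₁ ∧ … ∧ qₙ where each qᵢ is a path query in Q_p[◇]. In particular, a query of the form ρ₀ ∧ ◇(ρ₁ ∧ ⋀ᵢ₌₁ⁿ ◇qᵢ) is equivalent to ρ₀ ∧ ⋀ᵢ₌₁ⁿ ◇(ρ₁ ∧ ◇qᵢ). -/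
/-- The class `Q[◇]`: queries built from atoms, `⊤`, `∧` and strict `◇` only. -/
inductive IsQDiam {σ : Type} : LTL σ → Prop
  | atom (a : σ) : IsQDiam (.atom a)
  | top : IsQDiam .top
  | and {p q : LTL σ} : IsQDiam p → IsQDiam q → IsQDiam (p.and q)
  | ev {p : LTL σ} : IsQDiam p → IsQDiam (.ev p)

/-- The path query `ρ₀ ∧ ◇(ρ₁ ∧ ◇(… ∧ ◇ρₙ))` of `Q_p[◇]`. -/
noncomputable def pathD {σ : Type} (ρ : Finset σ) : List (Finset σ) → LTL σ
  | [] => conjF ρ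
  | ρ' :: rest => (conjF ρ).and (LTL.ev (pathD ρ' rest))

/-- The path `◇`-query corresponding to a word `ρ₀ρ₁…ρₙ` over `2^σ`. -/
noncomputable def wq {σ : Type} : List (Finset σ) → LTL σ
  | [] => LTL.top
  | ρ :: rest => pathD ρ rest

/-!
A conjunction of path queries `ρᵢ ∧ ◇ wᵢ` is equivalent to `ρ ∧ ⋀ᵢ ◇ wᵢ` with `ρ = ⋃ᵢ ρᵢ`
(a path without tail has `wᵢ = ⊤`, and `◇ ⊤` always holds). Such conjunctions are closed
under `∧`, and under `◇` because `◇ (ρ ∧ ⋀ᵢ ◇ wᵢ) ≡ ◇ ρ ∧ ⋀ᵢ ◇ (ρ ∧ ◇ wᵢ)`: given the right-hand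
side, take the earliest position where `ρ` holds together with some `◇ wᵢ`; as `◇ wⱼ` holding at
a position holds at all earlier ones, every `◇ wⱼ` holds there. The same argument gives the
distributivity law of the second part.
-/

section

variable {σ : Type}

theorem sat_foldr_and (D : List (Finset σ)) (L : List (LTL σ)) (ℓ : ℕ) :
    sat D (L.foldr LTL.and LTL.top) ℓ ↔ ∀ q ∈ L, sat D q ℓ := by
  induction L with
  | nil => simp [sat]
  | cons q L ih => simp [sat, ih]

theorem sat_conjF (D : List (Finset σ)) (ρ : Finset σ) (ℓ : ℕ) :
    sat D (conjF ρ) ℓ ↔ ρ ⊆ D.getD ℓ ∅ := by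
  rw [conjF, Finset.subset_iff, ← forall_congr' fun a => imp_congr_left Finset.mem_toList]
  induction ρ.toList with
  | nil => simp [sat]
  | cons a L ih => simp [sat, ih]

theorem sat_ev_top (D : List (Finset σ)) (ℓ : ℕ) : sat D (LTL.ev LTL.top) ℓ :=
  ⟨ℓ + 1, ℓ.lt_succ_self, trivial⟩

theorem sat_ev_of_le (D : List (Finset σ)) (q : LTL σ) {k m : ℕ} (hkm : k ≤ m)
    (h : sat D (LTL.ev q) m) : sat D (LTL.ev q) k :=
  let ⟨n, hmn, hn⟩ := h
  ⟨n, hkm.trans_lt hmn, hn⟩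

theorem sat_ev_congr {D : List (Finset σ)} {p q : LTL σ} (h : ∀ m, sat D p m ↔ sat D q m)
    (ℓ : ℕ) : sat D (LTL.ev p) ℓ ↔ sat D (LTL.ev q) ℓ := by
  simp only [sat, h]

theorem sat_ev_of_sat_ev_and {D : List (Finset σ)} {p q : LTL σ} {ℓ : ℕ}
    (h : sat D (LTL.ev (p.and q)) ℓ) : sat D (LTL.ev p) ℓ :=
  let ⟨m, hℓm, hp, _⟩ := h
  ⟨m, hℓm, hp⟩

theorem exists_sat_forall_sat_ev_iff {ι : Type*} (D : List (Finset σ)) (r : LTL σ)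
    (q : ι → LTL σ) (ℓ : ℕ) (s : Set ι) :
    (∃ m, ℓ < m ∧ sat D r m ∧ ∀ i ∈ s, sat D (LTL.ev (q i)) m) ↔
      sat D (LTL.ev r) ℓ ∧ ∀ i ∈ s, sat D (LTL.ev (r.and (LTL.ev (q i)))) ℓ := by
  classical
  constructor
  · rintro ⟨m, hℓm, hr, hq⟩
    exact ⟨⟨m, hℓm, hr⟩, fun i hi => ⟨m, hℓm, hr, hq i hi⟩⟩
  · rintro ⟨⟨m, hℓm, hr⟩, h⟩
    rcases s.eq_empty_or_nonempty with rfl | ⟨i₀, hi₀⟩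
    · exact ⟨m, hℓm, hr, fun i hi => hi.elim⟩
    have hex : ∃ m, ℓ < m ∧ sat D r m ∧ ∃ i ∈ s, sat D (LTL.ev (q i)) m :=
      let ⟨m, hℓm, hr, hq⟩ := h i₀ hi₀
      ⟨m, hℓm, hr, i₀, hi₀, hq⟩
    obtain ⟨hℓm, hr, -⟩ := Nat.find_spec hex
    refine ⟨Nat.find hex, hℓm, hr, fun i hi => ?_⟩
    obtain ⟨m, hℓm', hr', hq⟩ := h i hi
    exact sat_ev_of_le D (q i) (Nat.find_min' hex ⟨hℓm', hr', i, hi, hq⟩) hq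

theorem sat_pathD (D : List (Finset σ)) (ρ : Finset σ) (w : List (Finset σ)) (ℓ : ℕ) :
    sat D (pathD ρ w) ℓ ↔ sat D (conjF ρ) ℓ ∧ sat D (LTL.ev (wq w)) ℓ := by
  cases w with
  | nil => simp [pathD, wq, sat_ev_top]
  | cons ρ' rest => rfl

theorem sat_ev_pathD (D : List (Finset σ)) (ρ : Finset σ) (w : List (Finset σ)) (ℓ : ℕ) :
    sat D (LTL.ev (pathD ρ w)) ℓ ↔ sat D (LTL.ev ((conjF ρ).and (LTL.ev (wq w)))) ℓ :=
  sat_ev_congr (sat_pathD D ρ w) ℓ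

noncomputable def conjPaths (ps : List (Finset σ × List (Finset σ))) : LTL σ :=
  (ps.map fun p => pathD p.1 p.2).foldr LTL.and LTL.top

theorem sat_conjPaths (D : List (Finset σ)) (ps : List (Finset σ × List (Finset σ))) (ℓ : ℕ) :
    sat D (conjPaths ps) ℓ ↔ ∀ p ∈ ps, sat D (pathD p.1 p.2) ℓ := by
  rw [conjPaths, sat_foldr_and, List.forall_mem_map]

theorem sat_conjPaths_iff_sup [DecidableEq σ] (D : List (Finset σ))
    (ps : List (Finset σ × List (Finset σ))) (ℓ : ℕ) :
    sat D (conjPaths ps) ℓ ↔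
      sat D (conjF (ps.toFinset.sup Prod.fst)) ℓ ∧ ∀ p ∈ ps, sat D (LTL.ev (wq p.2)) ℓ := by
  simp only [sat_conjPaths, sat_pathD, forall_and, sat_conjF,
    Finset.sup_le_iff, List.mem_toFinset]

/-- Here `pathD ∅ [ρ]` is `◇ ρ` and `pathD ∅ (ρ :: w)` is `◇ (ρ ∧ ◇ wq w)`. -/
theorem ev_conjPaths_equivQ [DecidableEq σ] (ps : List (Finset σ × List (Finset σ))) :
    equivQ (LTL.ev (conjPaths ps))
      (conjPaths ((∅, [ps.toFinset.sup Prod.fst]) ::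
        ps.map fun p => (∅, ps.toFinset.sup Prod.fst :: p.2))) := by
  intro D ℓ
  set ρ := ps.toFinset.sup Prod.fst
  have hhead (w : List (Finset σ)) : sat D (pathD ∅ (ρ :: w)) ℓ ↔ sat D (LTL.ev (pathD ρ w)) ℓ := by
    simp [sat_pathD, sat_conjF, wq]
  calc sat D (LTL.ev (conjPaths ps)) ℓ
      ↔ ∃ m, ℓ < m ∧ sat D (conjF ρ) m ∧ ∀ p ∈ ps, sat D (LTL.ev (wq p.2)) m :=
        exists_congr fun m => and_congr_right fun _ => sat_conjPaths_iff_sup D ps m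
    _ ↔ sat D (LTL.ev (conjF ρ)) ℓ ∧ ∀ p ∈ ps, sat D (LTL.ev ((conjF ρ).and (LTL.ev (wq p.2)))) ℓ :=
        exists_sat_forall_sat_ev_iff D _ _ ℓ {p | p ∈ ps}
    _ ↔ _ := by
        rw [sat_conjPaths, List.forall_mem_cons, List.forall_mem_map]
        exact and_congr (hhead []).symm (forall₂_congr fun p _ => by rw [hhead, sat_ev_pathD])

theorem IsQDiam.exists_equivQ_conjPaths [DecidableEq σ] {q : LTL σ} (hq : IsQDiam q) :
    ∃ ps, equivQ q (conjPaths ps) := by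
  induction hq with
  | atom a => exact ⟨[({a}, [])], fun D ℓ => by simp [sat_conjPaths, pathD, sat_conjF, sat]⟩
  | top => exact ⟨[], fun D ℓ => by simp [sat_conjPaths, sat]⟩
  | and _ _ ihp ihq =>
    obtain ⟨ps₁, h₁⟩ := ihp
    obtain ⟨ps₂, h₂⟩ := ihq
    exact ⟨ps₁ ++ ps₂, fun D ℓ => by
      rw [sat_conjPaths, List.forall_mem_append, ← sat_conjPaths, ← sat_conjPaths, ← h₁, ← h₂]
      rfl⟩
  | ev _ ih =>
    obtain ⟨ps, h⟩ := ih
    exact ⟨_, fun D ℓ => (sat_ev_congr (h D) ℓ).trans (ev_conjPaths_equivQ ps D ℓ)⟩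

end

/-- Every `q ∈ Q[◇]` is equivalent to a conjunction of path queries of
`Q_p[◇]`; in particular `ρ₀ ∧ ◇(ρ₁ ∧ ⋀ᵢ ◇qᵢ) ≡ ρ₀ ∧ ⋀ᵢ ◇(ρ₁ ∧ ◇qᵢ)` (for a
nonempty family `q₁, …, qₙ`). -/
theorem QDiam_equiv_conj_of_paths (σ : Type) [DecidableEq σ] :
    (∀ q : LTL σ, IsQDiam q →
      ∃ ps : List (Finset σ × List (Finset σ)),
        equivQ q ((ps.map fun p => pathD p.1 p.2).foldr LTL.and LTL.top)) ∧
    (∀ (ρ₀ ρ₁ : Finset σ) (qs : List (LTL σ)), qs ≠ [] →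
      equivQ
        ((conjF ρ₀).and (LTL.ev ((conjF ρ₁).and ((qs.map LTL.ev).foldr LTL.and LTL.top))))
        ((conjF ρ₀).and
          ((qs.map fun q => LTL.ev ((conjF ρ₁).and (LTL.ev q))).foldr LTL.and LTL.top))) := by
  refine ⟨fun q hq => hq.exists_equivQ_conjPaths, fun ρ₀ ρ₁ qs hqs D ℓ => ?_⟩
  simp only [sat, sat_foldr_and, List.forall_mem_map]
  obtain ⟨q₀, hq₀⟩ := List.exists_mem_of_ne_nil qs hqs
  exact and_congr_right fun _ => (exists_sat_forall_sat_ev_iff D _ id ℓ {q | q ∈ qs}).trans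
    (and_iff_right_of_imp fun h => sat_ev_of_sat_ev_and (h q₀ hq₀))
end
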